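/- arXiv:2210.12601 — 3 statements merged into one kernel-verified Lean document; each statement's English description precedes it below -/
import Mathlib

section
/- Let G=(V,E) be a finite simple graph in which every vertex has degree at least 1, and let 0 < φ < 1 and 0 < ρ ≤ 1/2. If the conductance of G satisfies φ_G ≥ φ and the maximum cut value satisfies MC(G) ≤ 1 − ρ, then the bipartiteness ratio of G satisfies β_G ≥ φρ/2. -/
open scoped Classical
open Matrix

noncomputable section

namespace Sublinear

variable {V : Type*}

/-- The degree `d(v)` of a vertex, as a real number. -/
def deg [Fintype V] (G : SimpleGraph V) (v : V) : ℝ :=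
  ((Finset.univ.filter fun u => G.Adj v u).card : ℝ)

/-- The volume `μ_G(S)` of a set of vertices. -/
def vol [Fintype V] (G : SimpleGraph V) (S : Set V) : ℝ :=
  ∑ v ∈ Finset.univ.filter (fun v => v ∈ S), deg G v

/-- The number of ordered adjacent pairs `(u,v)` with `u ∈ S`, `v ∈ T`.
For disjoint `S`, `T` this equals the number `e_G(S,T)` of edges between `S` and `T`. -/
def eB [Fintype V] (G : SimpleGraph V) (S T : Set V) : ℝ :=
  (((Finset.univ : Finset (V × V)).filter
      fun p => p.1 ∈ S ∧ p.2 ∈ T ∧ G.Adj p.1 p.2).card : ℝ)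

/-- The number `e_G(S)` of edges with both endpoints in `S`. -/
def eIn [Fintype V] (G : SimpleGraph V) (S : Set V) : ℝ := eB G S S / 2

/-- The conductance `φ_G(S)` of a set of vertices. -/
def cond [Fintype V] (G : SimpleGraph V) (S : Set V) : ℝ :=
  eB G S Sᶜ / vol G S

/-- The conductance `φ_G` of the graph: the minimum of `φ_G(S)` over nonempty `S`
with `μ_G(S) ≤ μ_G/2`. -/
def conductance [Fintype V] (G : SimpleGraph V) : ℝ :=
  sInf {x | ∃ S : Set V, S.Nonempty ∧ vol G S ≤ vol G Set.univ / 2 ∧ x = cond G S}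

/-- The bipartiteness ratio `β_G(L,R)` of a pair of disjoint sets. -/
def bipRatio [Fintype V] (G : SimpleGraph V) (L R : Set V) : ℝ :=
  (2 * eIn G L + 2 * eIn G R + eB G (L ∪ R) (L ∪ R)ᶜ) / vol G (L ∪ R)

/-- The bipartiteness ratio `β_G(S)` of a set: the minimum of `β_G(L,R)` over
partitions `(L,R)` of `S`. -/
def bipS [Fintype V] (G : SimpleGraph V) (S : Set V) : ℝ :=
  sInf {x | ∃ L R : Set V, Disjoint L R ∧ L ∪ R = S ∧ x = bipRatio G L R}

/-- The bipartiteness ratio `β_G` of the graph: the minimum of `β_G(S)` over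
nonempty sets `S`. -/
def bip [Fintype V] (G : SimpleGraph V) : ℝ :=
  sInf {x | ∃ S : Set V, S.Nonempty ∧ x = bipS G S}

/-- The maximum cut value `MC(G)`: the maximum over sets `S` of the fraction of
edges cut by the bipartition `(S, Sᶜ)`. -/
def maxCut [Fintype V] (G : SimpleGraph V) : ℝ :=
  sSup {x | ∃ S : Set V, x = eB G S Sᶜ / eIn G Set.univ}

/-!
Put `S = L ∪ R` and `B = Sᶜ`; the numerator of `β(L,R)` is `2e(L) + 2e(R) + e(S,B)`.
If `μ(S) ≤ μ(B)`, conductance alone gives `e(S,B) ≥ φ μ(S)`. Otherwise use the max-cut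
bound on the two cuts `(L, Lᶜ)` and `(R, Rᶜ)`: together they cut at most `(1-ρ) μ_G` of
the volume, and what they leave is `2e(L) + 2e(R) + μ(B) ≥ ρ μ_G`. So either `μ(B)` is
below `ρ μ_G / 2` and `e(L)`, `e(R)` carry the bound, or `μ(B)` is large and the
conductance of `B` does, since `e(S,B) ≥ φ μ(B)`.
-/

section

variable [Fintype V] (G : SimpleGraph V)

lemma eB_nonneg (S T : Set V) : 0 ≤ eB G S T := Nat.cast_nonneg _

lemma eB_comm (S T : Set V) : eB G S T = eB G T S := by
  unfold eB
  norm_cast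
  apply Finset.card_bij' (fun p _ => p.swap) (fun p _ => p.swap) <;>
    simp +contextual [G.adj_comm]

lemma eB_union_right (S : Set V) {T₁ T₂ : Set V} (h : Disjoint T₁ T₂) :
    eB G S (T₁ ∪ T₂) = eB G S T₁ + eB G S T₂ := by
  unfold eB
  norm_cast
  rw [← Finset.card_union_of_disjoint]
  · congr 1
    ext p
    simp only [Finset.mem_filter, Finset.mem_union, Finset.mem_univ, true_and, Set.mem_union]
    tauto
  · exact Finset.disjoint_filter.2 fun p _ h₁ h₂ => Set.disjoint_left.1 h h₁.2.1 h₂.2.1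

lemma eB_union_left {S₁ S₂ : Set V} (h : Disjoint S₁ S₂) (T : Set V) :
    eB G (S₁ ∪ S₂) T = eB G S₁ T + eB G S₂ T := by
  rw [eB_comm, eB_union_right G T h, eB_comm G T, eB_comm G T]

lemma vol_eq_eB_univ (S : Set V) : vol G S = eB G S Set.univ := by
  unfold vol deg eB
  rw [Finset.card_filter, Fintype.sum_prod_type, Finset.sum_filter]
  push_cast
  refine Finset.sum_congr rfl fun v _ => ?_
  by_cases hv : v ∈ S
  · rw [if_pos hv, Finset.card_filter]
    simp [hv]
  · simp [hv]

lemma vol_nonneg (S : Set V) : 0 ≤ vol G S := by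
  rw [vol_eq_eB_univ]
  exact eB_nonneg G S _

lemma vol_empty : vol G ∅ = 0 := by
  simp [vol]

lemma vol_union {S T : Set V} (h : Disjoint S T) : vol G (S ∪ T) = vol G S + vol G T := by
  simp only [vol_eq_eB_univ, eB_union_left G h]

lemma vol_add_vol_compl (S : Set V) : vol G S + vol G Sᶜ = vol G Set.univ := by
  rw [← vol_union G disjoint_compl_right, Set.union_compl_self]

lemma vol_eq_eB_add_eB_compl (S : Set V) : vol G S = eB G S S + eB G S Sᶜ := by
  rw [vol_eq_eB_univ, ← Set.union_compl_self S, eB_union_right G S disjoint_compl_right]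

lemma eIn_univ : eIn G Set.univ = vol G Set.univ / 2 := by
  rw [eIn, vol_eq_eB_univ]

lemma conductance_le_cond {S : Set V} (hS : S.Nonempty) (hvol : vol G S ≤ vol G Set.univ / 2) :
    conductance G ≤ cond G S := by
  refine csInf_le ⟨0, ?_⟩ ⟨S, hS, hvol, rfl⟩
  rintro _ ⟨T, -, -, rfl⟩
  exact div_nonneg (eB_nonneg G T Tᶜ) (vol_nonneg G T)

lemma nonempty_of_conductance_pos (h : 0 < conductance G) : Nonempty V := by
  by_contra hV
  rw [not_nonempty_iff] at hV
  simp [conductance, Set.eq_empty_of_isEmpty] at h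

-- A nonempty set of volume zero has conductance `0 / 0 = 0`.
lemma vol_pos_of_conductance_pos (h : 0 < conductance G) {S : Set V} (hS : S.Nonempty) :
    0 < vol G S := by
  by_contra! hvol
  have hzero : vol G S = 0 := le_antisymm hvol (vol_nonneg G S)
  have hhalf : vol G S ≤ vol G Set.univ / 2 := by
    rw [hzero]
    exact div_nonneg (vol_nonneg G _) zero_le_two
  have := h.trans_le (conductance_le_cond G hS hhalf)
  simp [cond, hzero] at this

lemma mul_vol_le_eB_compl {φ : ℝ} (hφ : φ ≤ conductance G) {S : Set V}
    (hvol : vol G S ≤ vol G Set.univ / 2) : φ * vol G S ≤ eB G S Sᶜ := by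
  obtain rfl | hS := S.eq_empty_or_nonempty
  · simpa [vol_empty] using eB_nonneg G ∅ ∅ᶜ
  obtain hzero | hpos := (vol_nonneg G S).eq_or_lt
  · simpa [← hzero] using eB_nonneg G S Sᶜ
  rw [← le_div_iff₀ hpos]
  exact hφ.trans (conductance_le_cond G hS hvol)

lemma mul_min_vol_le_eB_compl {φ : ℝ} (hφ : φ ≤ conductance G) (S : Set V) :
    φ * min (vol G S) (vol G Sᶜ) ≤ eB G S Sᶜ := by
  have hsum := vol_add_vol_compl G S
  obtain hle | hle := le_total (vol G S) (vol G Sᶜ)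
  · rw [min_eq_left hle]
    exact mul_vol_le_eB_compl G hφ (by linarith)
  · rw [min_eq_right hle, eB_comm]
    simpa using mul_vol_le_eB_compl G hφ (S := Sᶜ) (by linarith)

lemma div_eIn_le_maxCut (S : Set V) : eB G S Sᶜ / eIn G Set.univ ≤ maxCut G := by
  have hfin := Set.finite_range fun T : Set V => eB G T Tᶜ / eIn G Set.univ
  refine le_csSup (hfin.subset ?_).bddAbove ⟨S, rfl⟩
  rintro _ ⟨T, rfl⟩
  exact ⟨T, rfl⟩

lemma eB_compl_le_maxCut_mul (S : Set V) : eB G S Sᶜ ≤ maxCut G * eIn G Set.univ := by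
  obtain hzero | hpos := (div_nonneg (vol_nonneg G Set.univ) zero_le_two).eq_or_lt
  · rw [eIn_univ, ← hzero, mul_zero]
    linarith [vol_eq_eB_add_eB_compl G S, vol_add_vol_compl G S, vol_nonneg G Sᶜ, eB_nonneg G S S]
  · rw [← div_le_iff₀ (eIn_univ G ▸ hpos)]
    exact div_eIn_le_maxCut G S

lemma mul_vol_univ_le_of_maxCut_le {ρ : ℝ} (hMC : maxCut G ≤ 1 - ρ) {L R : Set V}
    (hLR : Disjoint L R) :
    ρ * vol G Set.univ ≤ eB G L L + eB G R R + vol G (L ∪ R)ᶜ := by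
  have hvol : vol G Set.univ = vol G L + vol G R + vol G (L ∪ R)ᶜ := by
    rw [← vol_add_vol_compl G (L ∪ R), vol_union G hLR]
  have hcut (T : Set V) : eB G T Tᶜ ≤ (1 - ρ) * (vol G Set.univ / 2) := by
    rw [← eIn_univ]
    exact (eB_compl_le_maxCut_mul G T).trans
      (mul_le_mul_of_nonneg_right hMC (eIn_univ G ▸ by linarith [vol_nonneg G Set.univ]))
  linarith [hcut L, hcut R, vol_eq_eB_add_eB_compl G L, vol_eq_eB_add_eB_compl G R]

lemma le_bip [Nonempty V] {c : ℝ}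
    (h : ∀ L R : Set V, Disjoint L R → (L ∪ R).Nonempty → c ≤ bipRatio G L R) :
    c ≤ bip G := by
  refine le_csInf ⟨_, Set.univ, Set.univ_nonempty, rfl⟩ ?_
  rintro _ ⟨S, hS, rfl⟩
  refine le_csInf ⟨_, S, ∅, disjoint_bot_right, Set.union_empty S, rfl⟩ ?_
  rintro _ ⟨L, R, hLR, rfl, rfl⟩
  exact h L R hLR hS

lemma le_bipRatio {φ ρ : ℝ} (hφ0 : 0 < φ) (hφ1 : φ < 1) (hρ0 : 0 < ρ)
    (hρ1 : ρ ≤ 1 / 2) (hcond : φ ≤ conductance G) (hMC : maxCut G ≤ 1 - ρ) {L R : Set V}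
    (hLR : Disjoint L R) (hS : (L ∪ R).Nonempty) : φ * ρ / 2 ≤ bipRatio G L R := by
  rw [bipRatio, eIn, eIn, mul_div_cancel₀ _ two_ne_zero, mul_div_cancel₀ _ two_ne_zero]
  set S := L ∪ R
  have hcut := mul_min_vol_le_eB_compl G hcond S
  have huncut := mul_vol_univ_le_of_maxCut_le G hMC hLR
  have hsum := vol_add_vol_compl G S
  have hpos := vol_pos_of_conductance_pos G (hφ0.trans_le hcond) hS
  have hSc := vol_nonneg G Sᶜ
  rw [le_div_iff₀ hpos]
  obtain hle | hlt := le_total (vol G S) (vol G Sᶜ)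
  · rw [min_eq_left hle] at hcut
    nlinarith [mul_pos hφ0 hpos, eB_nonneg G L L, eB_nonneg G R R]
  · rw [min_eq_right hlt] at hcut
    have hφρ := mul_pos hφ0 hρ0
    obtain hsmall | hlarge := le_or_gt (2 * vol G Sᶜ) (ρ * vol G Set.univ)
    · nlinarith [mul_nonneg (mul_nonneg (sub_nonneg.2 hφ1.le) hρ0.le) (vol_nonneg G Set.univ),
        mul_nonneg hφρ.le hSc, eB_nonneg G S Sᶜ]
    · nlinarith [mul_lt_mul_of_pos_left hlarge hφ0, mul_nonneg hφρ.le hSc,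
        eB_nonneg G L L, eB_nonneg G R R]

end

theorem bipartiteness_ratio_lower_bound_general
    {V : Type*} [Fintype V] (G : SimpleGraph V)
    (φ ρ : ℝ) (hφ0 : 0 < φ) (hφ1 : φ < 1) (hρ0 : 0 < ρ) (hρ1 : ρ ≤ 1 / 2)
    (hcond : φ ≤ conductance G)
    (hMC : maxCut G ≤ 1 - ρ) :
    φ * ρ / 2 ≤ bip G := by
  have := nonempty_of_conductance_pos G (hφ0.trans_le hcond)
  exact le_bip G fun L R hLR hS => le_bipRatio G hφ0 hφ1 hρ0 hρ1 hcond hMC hLR hS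

/-- If every vertex of `G` has degree at least 1, `0 < φ < 1`,
`0 < ρ ≤ 1/2`, the conductance of `G` is at least `φ`, and the maximum cut value
of `G` is at most `1 - ρ`, then the bipartiteness ratio of `G` is at least `φρ/2`. -/
theorem bipartiteness_ratio_lower_bound
    {V : Type*} [Fintype V] (G : SimpleGraph V)
    (hdeg : ∀ v, 1 ≤ deg G v)
    (φ ρ : ℝ) (hφ0 : 0 < φ) (hφ1 : φ < 1) (hρ0 : 0 < ρ) (hρ1 : ρ ≤ 1 / 2)
    (hcond : φ ≤ conductance G)
    (hMC : maxCut G ≤ 1 - ρ) :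
    φ * ρ / 2 ≤ bip G :=
  bipartiteness_ratio_lower_bound_general G φ ρ hφ0 hφ1 hρ0 hρ1 hcond hMC

end Sublinear
end
end

section
/- Let I = (G,q,c) be an instance of Max E2Lin(q) with OPT(I) ≥ 1 − ε for some 0 < ε < 1. Then the vertex set of the label-extended graph G_I can be partitioned into q sets S_0, …, S_{q−1} such that for every i, μ_{G_I}(S_i) = μ_{G_I}/q and the conductance φ_{G_I}(S_i) is at most ε. -/
open scoped Classical
open Matrix

noncomputable section

namespace Sublinear

variable {V : Type*}

/-- The label-extended graph `G_I` of a Max E2Lin(q) instance `I = (G, q, c)`: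
vertices are pairs `(u,i)` with `u` a vertex of `G` and `i ∈ Z_q`, and `(u,i)` is
adjacent to `(v,j)` iff `{u,v}` is an edge of `G` and `j = i + c u v`. -/
def labelExt {V : Type*} (G : SimpleGraph V) {q : ℕ} (c : V → V → ZMod q)
    (hc : ∀ u v, G.Adj u v → c v u = -c u v) : SimpleGraph (V × ZMod q) where
  Adj p p' := G.Adj p.1 p'.1 ∧ p'.2 = p.2 + c p.1 p'.1
  symm := by
    constructor
    rintro ⟨u, i⟩ ⟨v, j⟩ ⟨hadj, hj⟩
    refine ⟨hadj.symm, ?_⟩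
    simp only at hj ⊢
    rw [hc u v hadj, hj]
    ring
  loopless := by
    constructor
    rintro ⟨u, i⟩ ⟨hadj, _⟩
    exact G.loopless.irrefl u hadj

/-- The fraction of the edges of `G` that are satisfied by the assignment `ψ`
in the Max E2Lin(q) instance `(G, q, c)`: an edge `{u,v}` is satisfied if
`ψ u - ψ v = c u v`. -/
def satFrac [Fintype V] (G : SimpleGraph V) {q : ℕ} (c : V → V → ZMod q)
    (ψ : V → ZMod q) : ℝ :=
  (((Finset.univ : Finset (V × V)).filter
      fun p => G.Adj p.1 p.2 ∧ ψ p.1 - ψ p.2 = c p.1 p.2).card : ℝ)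
    / eB G Set.univ Set.univ

/-! A good assignment `ψ` yields the partition: the `i`-th part is the graph of `u ↦ i - ψ u`
inside `G_I`. Each part is a copy of `V` carrying the same degrees, so it has volume `μ_G`, and
an edge of `G_I` leaves the part exactly when it lies over an edge of `G` that `ψ` violates,
so its conductance is the fraction `1 - satFrac G c ψ ≤ ε` of violated edges. -/

section LabelExtended

open scoped Finset

def labelSlice {q : ℕ} (ψ : V → ZMod q) (i : ZMod q) : Set (V × ZMod q) := {p | p.2 = i - ψ p.1}

lemma labelSlice_disjoint {q : ℕ} (ψ : V → ZMod q) {i j : ZMod q} (hij : i ≠ j) :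
    Disjoint (labelSlice ψ i) (labelSlice ψ j) := by
  refine Set.disjoint_left.mpr fun p hi hj => hij ?_
  simp only [labelSlice, Set.mem_ofPred_eq] at hi hj
  simpa using hi.symm.trans hj

lemma iUnion_labelSlice {q : ℕ} (ψ : V → ZMod q) : ⋃ i, labelSlice ψ i = Set.univ :=
  Set.eq_univ_of_forall fun p => Set.mem_iUnion.mpr ⟨p.2 + ψ p.1, by simp [labelSlice]⟩

variable [Fintype V] (G : SimpleGraph V)

lemma eB_univ_univ :
    eB G Set.univ Set.univ = #(Finset.univ.filter fun p : V × V => G.Adj p.1 p.2) := by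
  simp [eB]

lemma vol_univ_eq_eB : vol G Set.univ = eB G Set.univ Set.univ := by
  rw [eB_univ_univ, Finset.card_filter, Fintype.sum_prod_type]
  simp only [vol, deg, Set.mem_univ, Finset.filter_true, Finset.card_filter]
  push_cast
  rfl

variable {q : ℕ} [NeZero q] (c : V → V → ZMod q) (hc : ∀ u v, G.Adj u v → c v u = -c u v)

lemma deg_labelExt (u : V) (i : ZMod q) : deg (labelExt G c hc) (u, i) = deg G u := by
  unfold deg
  norm_cast
  refine Finset.card_nbij' Prod.fst (fun v => (v, i + c u v)) ?_ ?_ ?_ (fun _ _ => rfl)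
  all_goals
    intro p hp
    simp only [Finset.mem_coe, Finset.mem_filter, Finset.mem_univ, true_and] at hp ⊢
    simp only [labelExt] at hp ⊢
  · exact hp.1
  · exact ⟨hp, trivial⟩
  · exact Prod.ext rfl hp.2.symm

lemma vol_labelExt_univ : vol (labelExt G c hc) Set.univ = q * vol G Set.univ := by
  simp [vol, Fintype.sum_prod_type, deg_labelExt, Finset.mul_sum]

lemma vol_labelSlice (ψ : V → ZMod q) (i : ZMod q) :
    vol (labelExt G c hc) (labelSlice ψ i) = vol G Set.univ := by
  rw [vol, vol, Finset.sum_filter, Fintype.sum_prod_type]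
  simp [labelSlice, deg_labelExt]

lemma eB_labelSlice_compl (ψ : V → ZMod q) (i : ZMod q) :
    eB (labelExt G c hc) (labelSlice ψ i) (labelSlice ψ i)ᶜ
      = #(Finset.univ.filter fun p : V × V => G.Adj p.1 p.2 ∧ ψ p.1 - ψ p.2 ≠ c p.1 p.2) := by
  unfold eB
  norm_cast
  refine Finset.card_nbij' (fun p => (p.1.1, p.2.1))
    (fun p => ((p.1, i - ψ p.1), (p.2, i - ψ p.1 + c p.1 p.2))) ?_ ?_ ?_ (fun _ _ => rfl)
  · rintro ⟨⟨u, j⟩, ⟨v, k⟩⟩ h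
    simp only [Finset.mem_coe, Finset.mem_filter, Finset.mem_univ, true_and,
      Set.mem_compl_iff] at h ⊢
    simp only [labelSlice, labelExt, Set.mem_ofPred_eq] at h ⊢
    obtain ⟨rfl, hout, hadj, rfl⟩ := h
    exact ⟨hadj, fun hsat => hout (by rw [← hsat]; ring)⟩
  · rintro ⟨u, v⟩ h
    simp only [Finset.mem_coe, Finset.mem_filter, Finset.mem_univ, true_and,
      Set.mem_compl_iff] at h ⊢
    simp only [labelSlice, labelExt, Set.mem_ofPred_eq] at h ⊢
    exact ⟨trivial, fun hin => h.2 (by linear_combination -hin), h.1, trivial⟩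
  · rintro ⟨⟨u, j⟩, ⟨v, k⟩⟩ h
    simp only [Finset.mem_coe, Finset.mem_filter, Finset.mem_univ, true_and] at h
    simp only [labelSlice, labelExt, Set.mem_ofPred_eq] at h
    simp [h.1, h.2.2.2]

lemma cond_labelSlice (ψ : V → ZMod q) (i : ZMod q) (hG : eB G Set.univ Set.univ ≠ 0) :
    cond (labelExt G c hc) (labelSlice ψ i) = 1 - satFrac G c ψ := by
  have hsplit := Finset.card_filter_add_card_filter_not
    (s := Finset.univ.filter fun p : V × V => G.Adj p.1 p.2)
    (fun p => ψ p.1 - ψ p.2 = c p.1 p.2)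
  simp only [Finset.filter_filter] at hsplit
  rw [cond, satFrac, eB_labelSlice_compl, vol_labelSlice, vol_univ_eq_eB, eq_sub_iff_add_eq,
    ← add_div, div_eq_one_iff_eq hG, eB_univ_univ, ← hsplit]
  push_cast
  ring

end LabelExtended

theorem e2lin_completeness_partition_general
    {V : Type*} [Fintype V] (G : SimpleGraph V)
    (q : ℕ) [NeZero q]
    (c : V → V → ZMod q) (hc : ∀ u v, G.Adj u v → c v u = -c u v)
    (ε : ℝ) (hε1 : ε < 1)
    (hopt : ∃ ψ : V → ZMod q, 1 - ε ≤ satFrac G c ψ) :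
    ∃ S : ZMod q → Set (V × ZMod q),
      (∀ i j, i ≠ j → Disjoint (S i) (S j)) ∧
      (⋃ i, S i) = Set.univ ∧
      ∀ i, vol (labelExt G c hc) (S i) = vol (labelExt G c hc) Set.univ / q ∧
           cond (labelExt G c hc) (S i) ≤ ε := by
  obtain ⟨ψ, hψ⟩ := hopt
  have hG : eB G Set.univ Set.univ ≠ 0 := by
    intro h
    simp only [satFrac, h, div_zero] at hψ
    linarith
  refine ⟨labelSlice ψ, fun i j => labelSlice_disjoint ψ, iUnion_labelSlice ψ, fun i => ⟨?_, ?_⟩⟩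
  · rw [vol_labelSlice, vol_labelExt_univ, mul_div_cancel_left₀ _ (NeZero.ne (q : ℝ))]
  · rw [cond_labelSlice G c hc ψ i hG]
    linarith

/-- If `I = (G,q,c)` is a Max E2Lin(q) instance with
`OPT(I) ≥ 1 - ε`, `0 < ε < 1`, then the vertex set of the label-extended graph
`G_I` can be partitioned into `q` sets, each of volume `μ_{G_I}/q` and
conductance at most `ε`. -/
theorem e2lin_completeness_partition
    {V : Type*} [Fintype V] (G : SimpleGraph V)
    (hdeg : ∀ v, 1 ≤ deg G v)
    (q : ℕ) (hq : 2 ≤ q) [NeZero q]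
    (c : V → V → ZMod q) (hc : ∀ u v, G.Adj u v → c v u = -c u v)
    (ε : ℝ) (hε0 : 0 < ε) (hε1 : ε < 1)
    (hopt : ∃ ψ : V → ZMod q, 1 - ε ≤ satFrac G c ψ) :
    ∃ S : ZMod q → Set (V × ZMod q),
      (∀ i j, i ≠ j → Disjoint (S i) (S j)) ∧
      (⋃ i, S i) = Set.univ ∧
      ∀ i, vol (labelExt G c hc) (S i) = vol (labelExt G c hc) Set.univ / q ∧
           cond (labelExt G c hc) (S i) ≤ ε :=
  e2lin_completeness_partition_general G q c hc ε hε1 hopt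

end Sublinear
end
end

section
/- Let a, b > 0 be real numbers and let X and Y be independent random variables on a probability space such that X has the Poisson distribution with mean a and Y has the Poisson distribution with mean b. Then the variance of (X − Y)² − X − Y satisfies Var[(X − Y)² − X − Y] ≤ 4(a − b)²(a + b) + 8(a + b)². -/
open MeasureTheory ProbabilityTheory
open scoped NNReal Nat

/-!
The Poisson law has factorial moments `E[X (X - 1) ⋯ (X - k + 1)] = a ^ k`, so for independent
Poisson variables the expectation of any polynomial in `X, Y` written in the falling-factorial
basis is read off directly. In that basis `Z = (X - Y)² - X - Y` is `X₍₂₎ - 2 X₍₁₎ Y₍₁₎ + Y₍₂₎`,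
whence `E[Z] = (a - b)²`, and expanding `Z²` gives
`E[Z²] = (a - b)⁴ + 4 (a - b)² (a + b) + 2 (a + b)²`, so `Var[Z] = 4 (a - b)² (a + b) + 2 (a + b)²`.
-/

section Discrete

variable {α β : Type*} [MeasurableSpace α] [MeasurableSpace β]

theorem integral_eq_of_hasSum_measureReal_singleton [MeasurableSingletonClass α] [Countable α]
    {ν : Measure α} [IsFiniteMeasure ν] {f : α → ℝ} {s : ℝ}
    (h : HasSum (fun x => ν.real {x} * f x) s) : ∫ x, f x ∂ν = s := by
  nth_rw 1 [← Measure.sum_smul_dirac ν]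
  rw [integral_sum_dirac fun x => measure_ne_top ν {x}]
  exact h.tsum_eq

theorem HasSum.mul_measureReal_prod {ν₁ : Measure α} {ν₂ : Measure β} [SigmaFinite ν₂]
    {f : α → ℝ} {g : β → ℝ} {s t : ℝ}
    (hf : HasSum (fun x => ν₁.real {x} * f x) s) (hg : HasSum (fun y => ν₂.real {y} * g y) t) :
    HasSum (fun p : α × β => (ν₁.prod ν₂).real {p} * (f p.1 * g p.2)) (s * t) := by
  refine (hf.mul hg (summable_mul_of_summable_norm hf.summable.norm hg.summable.norm)).congr_fun
    fun p => ?_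
  rw [← Set.singleton_prod_singleton, measureReal_prod_prod]
  ring

end Discrete

theorem hasLaw_poissonMeasure_of_measure_eq {Ω : Type*} [MeasurableSpace Ω] {μ : Measure Ω}
    {X : Ω → ℕ} (hX : Measurable X) {r : ℝ≥0}
    (h : ∀ k : ℕ, μ {ω | X ω = k} = ENNReal.ofReal (Real.exp (-r) * r ^ k / k !)) :
    HasLaw X Po(r) μ where
  aemeasurable := hX.aemeasurable
  map_eq := Measure.ext_of_singleton fun k => by
    rw [Measure.map_apply hX (measurableSet_singleton k), poissonMeasure_singleton]
    exact h k

theorem hasSum_descPochhammer_poissonMeasure (r : ℝ≥0) (k : ℕ) :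
    HasSum (fun n : ℕ => Po(r).real {n} * (descPochhammer ℝ k).eval (n : ℝ)) (r ^ k) := by
  have hshift : ∀ n : ℕ, Real.exp (-r) * r ^ (n + k) / (n + k)! * ((n + k).descFactorial k : ℝ)
      = r ^ k * (Real.exp (-r) * r ^ n / n !) := by
    intro n
    have hfac := Nat.factorial_mul_descFactorial (Nat.le_add_left k n)
    rw [Nat.add_sub_cancel] at hfac
    rw [← hfac, Nat.cast_mul]
    field_simp
    ring
  simp_rw [poissonMeasure_real_singleton, descPochhammer_eval_eq_descFactorial]
  rw [← hasSum_nat_add_iff' k, Finset.sum_eq_zero fun n hn => by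
    rw [Nat.descFactorial_eq_zero_iff_lt.2 (Finset.mem_range.1 hn), Nat.cast_zero, mul_zero],
    sub_zero]
  simpa only [hshift, mul_one] using (hasSum_one_poissonMeasure r).mul_left ((r : ℝ) ^ k)

section Estimator

def sqDiffEstimator (p : ℕ × ℕ) : ℝ := ((p.1 : ℝ) - p.2) ^ 2 - p.1 - p.2

variable (r s : ℝ≥0)

theorem hasSum_descPochhammer_mul_poissonMeasure_prod (i j : ℕ) :
    HasSum (fun p : ℕ × ℕ => (Po(r).prod Po(s)).real {p} *
      ((descPochhammer ℝ i).eval (p.1 : ℝ) * (descPochhammer ℝ j).eval (p.2 : ℝ)))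
      (r ^ i * s ^ j) :=
  (hasSum_descPochhammer_poissonMeasure r i).mul_measureReal_prod
    (hasSum_descPochhammer_poissonMeasure s j)

theorem hasSum_sqDiffEstimator :
    HasSum (fun p => (Po(r).prod Po(s)).real {p} * sqDiffEstimator p) (((r : ℝ) - s) ^ 2) := by
  have m := hasSum_descPochhammer_mul_poissonMeasure_prod r s
  convert ((m 2 0).add (m 0 2)).add ((m 1 1).mul_left (-2)) using 1
  · ext p
    simp only [sqDiffEstimator, descPochhammer_eval_eq_prod_range, Finset.prod_range_succ,
      Finset.prod_range_zero]
    ring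
  · ring

theorem hasSum_sqDiffEstimator_sq :
    HasSum (fun p => (Po(r).prod Po(s)).real {p} * sqDiffEstimator p ^ 2)
      (((r : ℝ) - s) ^ 4 + 4 * ((r : ℝ) - s) ^ 2 * (r + s) + 2 * ((r : ℝ) + s) ^ 2) := by
  have m := hasSum_descPochhammer_mul_poissonMeasure_prod r s
  convert (m 4 0).add (m 0 4) |>.add (((m 3 0).add (m 0 3)).mul_left 4)
    |>.add (((m 2 0).add (m 0 2)).mul_left 2) |>.add ((m 2 2).mul_left 6)
    |>.add (((m 2 1).add (m 1 2)).mul_left (-4)) |>.add ((m 1 1).mul_left 4)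
    |>.add (((m 3 1).add (m 1 3)).mul_left (-4)) using 1
  · ext p
    simp only [sqDiffEstimator, descPochhammer_eval_eq_prod_range, Finset.prod_range_succ,
      Finset.prod_range_zero]
    ring
  · ring

end Estimator

/-- If `X` and `Y` are independent random variables with Poisson
distributions of means `a > 0` and `b > 0` respectively, then the variance
`Var[Z] = E[Z²] - (E[Z])²` of `Z = (X - Y)² - X - Y` satisfies
`Var[Z] ≤ 4(a-b)²(a+b) + 8(a+b)²`. -/
theorem poisson_estimator_variance
    {Ω : Type*} [MeasurableSpace Ω] (μ : Measure Ω) [IsProbabilityMeasure μ]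
    (X Y : Ω → ℕ) (hX : Measurable X) (hY : Measurable Y)
    (hind : IndepFun X Y μ)
    (a b : ℝ) (ha : 0 < a) (hb : 0 < b)
    (hXd : ∀ k : ℕ, μ {ω | X ω = k}
        = ENNReal.ofReal (Real.exp (-a) * a ^ k / (Nat.factorial k)))
    (hYd : ∀ k : ℕ, μ {ω | Y ω = k}
        = ENNReal.ofReal (Real.exp (-b) * b ^ k / (Nat.factorial k))) :
    (∫ ω, ((((X ω : ℝ) - (Y ω : ℝ)) ^ 2 - (X ω : ℝ) - (Y ω : ℝ))) ^ 2 ∂μ)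
      - (∫ ω, (((X ω : ℝ) - (Y ω : ℝ)) ^ 2 - (X ω : ℝ) - (Y ω : ℝ)) ∂μ) ^ 2
      ≤ 4 * (a - b) ^ 2 * (a + b) + 8 * (a + b) ^ 2 := by
  lift a to ℝ≥0 using ha.le
  lift b to ℝ≥0 using hb.le
  have hlaw : HasLaw (fun ω => (X ω, Y ω)) (Po(a).prod Po(b)) μ :=
    hind.hasLaw_prod (hasLaw_poissonMeasure_of_measure_eq hX hXd)
      (hasLaw_poissonMeasure_of_measure_eq hY hYd)
  have hmean : ∫ ω, sqDiffEstimator (X ω, Y ω) ∂μ = ((a : ℝ) - b) ^ 2 :=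
    (hlaw.integral_comp .of_discrete).trans
      (integral_eq_of_hasSum_measureReal_singleton (hasSum_sqDiffEstimator a b))
  have hsecond : ∫ ω, sqDiffEstimator (X ω, Y ω) ^ 2 ∂μ
      = ((a : ℝ) - b) ^ 4 + 4 * ((a : ℝ) - b) ^ 2 * (a + b) + 2 * ((a : ℝ) + b) ^ 2 :=
    (hlaw.integral_comp .of_discrete).trans
      (integral_eq_of_hasSum_measureReal_singleton (hasSum_sqDiffEstimator_sq a b))
  change ∫ ω, sqDiffEstimator (X ω, Y ω) ^ 2 ∂μ - (∫ ω, sqDiffEstimator (X ω, Y ω) ∂μ) ^ 2 ≤ _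
  rw [hmean, hsecond]
  nlinarith [sq_nonneg ((a : ℝ) + b)]
end
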